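/- Consider a single-layer GRU with state dimension n_x, weights W_z, W_f, W_r ∈ ℝ^{n_x×n_u}, U_z, U_f, U_r ∈ ℝ^{n_x×n_x}, U_o ∈ ℝ^{n_y×n_x}, biases b_z, b_f, b_r ∈ ℝ^{n_x}, b_o ∈ ℝ^{n_y}, evolving as x_{k+1} = z_k ∘ x_k + (1 − z_k) ∘ r_k with output y_k = U_o x_k + b_o, where z_k = σ(W_z u_k + U_z x_k + b_z), f_k = σ(W_f u_k + U_f x_k + b_f), r_k = tanh(W_r u_k + U_r (f_k ∘ x_k) + b_r), and its Luenberger-like observer with gains L_z, L_f ∈ ℝ^{n_x×n_y}, evolving as x̂_{k+1} = ẑ_k ∘ x̂_k + (1 − ẑ_k) ∘ r̂_k, ŷ_k = U_o x̂_k + b_o, ẑ_k = σ(W_z u_k + U_z x̂_k + b_z + L_z(y_k − ŷ_k)), f̂_k = σ(W_f u_k + U_f x̂_k + b_f + L_f(y_k − ŷ_k)), r̂_k = tanh(W_r u_k + U_r (f̂_k ∘ x̂_k) + b_r). Fix x̌ ≥ 1 and suppose ‖x_0‖_∞ ≤ x̌, ‖x̂_0‖_∞ ≤ x̌, and ‖u_k‖_∞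 ≤ 1 for all k. If there exists λ_o ∈ (0,1) such that κ_o(σ̌_z, L_z, L_f) < λ_o and κ_o(1 − σ̌_z, L_z, L_f) < λ_o, then for every k ∈ ℕ, ‖x̂_k − x_k‖₂ ≤ √(n_x)·λ_o^k·‖x̂_0 − x_0‖₂. -/

import Mathlib

open Matrix

/-- The logistic sigmoid. -/
noncomputable def sigmoid (s : ℝ) : ℝ := 1 / (1 + Real.exp (-s))

/-- ∞-norm on `Fin n → ℝ`. -/
noncomputable def normInf {n : ℕ} (v : Fin n → ℝ) : ℝ := ⨆ i, |v i|

/-- Euclidean norm on `Fin n → ℝ`. -/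
noncomputable def norm2 {n : ℕ} (v : Fin n → ℝ) : ℝ := Real.sqrt (∑ i, v i ^ 2)

/-- Induced ∞-norm of a matrix (maximum absolute row sum). -/
noncomputable def matNormInf {n m : ℕ} (A : Matrix (Fin n) (Fin m) ℝ) : ℝ :=
  ⨆ i, ∑ j, |A i j|

/-!
Both trajectories stay in the box `‖·‖∞ ≤ x̌`, since a GRU step is a convex combination of
the previous state and a `tanh` value. On that box the system's gate `z` lies in
`[1 - σ̌_z, σ̌_z]`, its gate `f` lies below `σ̌_f`, and the observer's candidate `r̂` is bounded
by `φ̌_r`. Coordinatewise,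
`ẑ x̂ + (1 - ẑ) r̂ - (z x + (1 - z) r) = z (x̂ - x) + (ẑ - z) (x̂ - r̂) + (1 - z) (r̂ - r)`;
since `σ` is `1/4`-Lipschitz, `tanh` is `1`-Lipschitz, and the output injection turns `U` into
`U - L U_o` in the gate differences, the new error is at most `κ_o(z) ‖x̂ - x‖∞`. As `κ_o` is
affine, it is below `λ_o` on the whole gate interval, so the `∞`-norm of the error contracts by
`λ_o` per step; comparing `‖·‖₂` with `‖·‖∞` costs the factor `√n_x`.
-/

theorem sigmoid_eq_real_sigmoid : sigmoid = Real.sigmoid := by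
  funext s
  rw [sigmoid, Real.sigmoid_def, one_div]

namespace Real

theorem sigmoid_mul_one_sub_le (s : ℝ) : sigmoid s * (1 - sigmoid s) ≤ 4⁻¹ := by
  nlinarith [sq_nonneg (sigmoid s - 2⁻¹)]

theorem lipschitzWith_sigmoid : LipschitzWith 4⁻¹ sigmoid := by
  refine lipschitzWith_of_nnnorm_deriv_le differentiable_sigmoid fun s => ?_
  rw [← NNReal.coe_le_coe, coe_nnnorm, deriv_sigmoid, norm_eq_abs,
    abs_of_nonneg (mul_nonneg (sigmoid_nonneg s) (sub_nonneg.2 (sigmoid_le_one s)))]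
  exact_mod_cast sigmoid_mul_one_sub_le s

theorem abs_sigmoid_sub_le (a b : ℝ) : |sigmoid a - sigmoid b| ≤ 4⁻¹ * |a - b| := by
  simpa [Real.dist_eq] using lipschitzWith_sigmoid.dist_le_mul a b

theorem tanh_eq_two_mul_sigmoid_sub_one (x : ℝ) : tanh x = 2 * sigmoid (2 * x) - 1 := by
  rw [tanh_eq_sinh_div_cosh, sinh_eq, cosh_eq, sigmoid_def]
  have h : exp (-(2 * x)) = exp (-x) * exp (-x) := by rw [← exp_add]; ring_nf
  rw [h]
  have hinv : exp x * exp (-x) = 1 := by rw [← exp_add]; simp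
  field_simp
  linear_combination (2 * exp (-x)) * hinv

theorem tanh_monotone : Monotone tanh := fun a b h => by
  simp only [tanh_eq_two_mul_sigmoid_sub_one]
  linarith [sigmoid_monotone (mul_le_mul_of_nonneg_left h zero_le_two)]

theorem abs_tanh_sub_le (a b : ℝ) : |tanh a - tanh b| ≤ |a - b| := by
  simp only [tanh_eq_two_mul_sigmoid_sub_one]
  calc |2 * sigmoid (2 * a) - 1 - (2 * sigmoid (2 * b) - 1)|
      = 2 * |sigmoid (2 * a) - sigmoid (2 * b)| := by
        rw [sub_sub_sub_cancel_right, ← mul_sub, abs_mul, abs_two]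
    _ ≤ 2 * (4⁻¹ * |2 * a - 2 * b|) := by gcongr; exact abs_sigmoid_sub_le _ _
    _ = |a - b| := by rw [← mul_sub, abs_mul, abs_two]; ring

theorem abs_tanh_le_tanh {a b : ℝ} (h : |a| ≤ b) : |tanh a| ≤ tanh b := by
  rw [abs_le] at h ⊢
  exact ⟨by simpa [tanh_neg] using tanh_monotone h.1, tanh_monotone h.2⟩

theorem sigmoid_mem_Icc_of_abs_le {a b : ℝ} (h : |a| ≤ b) :
    sigmoid a ∈ Set.Icc (1 - sigmoid b) (sigmoid b) := by
  rw [abs_le] at h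
  exact ⟨by simpa [sigmoid_neg] using sigmoid_monotone h.1, sigmoid_monotone h.2⟩

end Real

theorem abs_le_normInf {n : ℕ} (v : Fin n → ℝ) (i : Fin n) : |v i| ≤ normInf v :=
  le_ciSup (f := fun i => |v i|) (Set.finite_range _).bddAbove i

theorem normInf_nonneg {n : ℕ} (v : Fin n → ℝ) : 0 ≤ normInf v :=
  Real.iSup_nonneg fun i => abs_nonneg (v i)

theorem normInf_le {n : ℕ} {v : Fin n → ℝ} {c : ℝ} (hc : 0 ≤ c) (h : ∀ i, |v i| ≤ c) :
    normInf v ≤ c :=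
  Real.iSup_le h hc

theorem sum_abs_le_matNormInf {n m : ℕ} (A : Matrix (Fin n) (Fin m) ℝ) (i : Fin n) :
    ∑ j, |A i j| ≤ matNormInf A :=
  le_ciSup (f := fun i => ∑ j, |A i j|) (Set.finite_range _).bddAbove i

theorem matNormInf_nonneg {n m : ℕ} (A : Matrix (Fin n) (Fin m) ℝ) : 0 ≤ matNormInf A :=
  Real.iSup_nonneg fun i => Finset.sum_nonneg fun j _ => abs_nonneg (A i j)

theorem abs_mulVec_le {n m : ℕ} (A : Matrix (Fin n) (Fin m) ℝ) (v : Fin m → ℝ) (i : Fin n) :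
    |(A *ᵥ v) i| ≤ (∑ j, |A i j|) * normInf v :=
  calc |(A *ᵥ v) i| = |∑ j, A i j * v j| := rfl
    _ ≤ ∑ j, |A i j| * |v j| := by
        simpa only [abs_mul] using Finset.abs_sum_le_sum_abs (fun j => A i j * v j) Finset.univ
    _ ≤ ∑ j, |A i j| * normInf v := by gcongr with j; exact abs_le_normInf v j
    _ = (∑ j, |A i j|) * normInf v := (Finset.sum_mul _ _ _).symm

theorem abs_mulVec_le_matNormInf {n m : ℕ} (A : Matrix (Fin n) (Fin m) ℝ) (v : Fin m → ℝ)
    (i : Fin n) : |(A *ᵥ v) i| ≤ matNormInf A * normInf v :=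
  (abs_mulVec_le A v i).trans <|
    mul_le_mul_of_nonneg_right (sum_abs_le_matNormInf A i) (normInf_nonneg v)

theorem norm2_le_sqrt_mul_normInf {n : ℕ} (v : Fin n → ℝ) :
    norm2 v ≤ √n * normInf v := by
  have hsum : ∑ i, v i ^ 2 ≤ n * normInf v ^ 2 :=
    calc ∑ i, v i ^ 2 ≤ ∑ _i : Fin n, normInf v ^ 2 := by
          refine Finset.sum_le_sum fun i _ => ?_
          rw [← sq_abs]
          exact pow_le_pow_left₀ (abs_nonneg _) (abs_le_normInf v i) 2
      _ = n * normInf v ^ 2 := by simp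
  calc norm2 v ≤ √(n * normInf v ^ 2) := Real.sqrt_le_sqrt hsum
    _ = √n * normInf v := by rw [Real.sqrt_mul n.cast_nonneg, Real.sqrt_sq (normInf_nonneg v)]

theorem normInf_le_norm2 {n : ℕ} (v : Fin n → ℝ) : normInf v ≤ norm2 v :=
  normInf_le (Real.sqrt_nonneg _) fun i => by
    rw [← Real.sqrt_sq_eq_abs]
    exact Real.sqrt_le_sqrt (Finset.single_le_sum (fun j _ => sq_nonneg (v j)) (Finset.mem_univ i))

theorem abs_gated_sub_gated_le {z z' x x' r r' : ℝ} (hz₀ : 0 ≤ z) (hz₁ : z ≤ 1) :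
    |z' * x' + (1 - z') * r' - (z * x + (1 - z) * r)| ≤
      z * |x' - x| + |z' - z| * |x' - r'| + (1 - z) * |r' - r| := by
  have h := abs_add_three (z * (x' - x)) ((z' - z) * (x' - r')) ((1 - z) * (r' - r))
  rw [abs_mul, abs_mul, abs_mul, abs_of_nonneg hz₀, abs_of_nonneg (sub_nonneg.2 hz₁)] at h
  rwa [show z' * x' + (1 - z') * r' - (z * x + (1 - z) * r) =
    z * (x' - x) + (z' - z) * (x' - r') + (1 - z) * (r' - r) by ring]

/-- The argument of `σ̌` and `φ̌`, with `c = x̌`. -/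
noncomputable def gateBound {n m p : ℕ} (W : Matrix (Fin n) (Fin m) ℝ)
    (U : Matrix (Fin n) (Fin p) ℝ) (b : Fin n → ℝ) (c : ℝ) : ℝ :=
  ⨆ i, (∑ j, |W i j| + c * ∑ j, |U i j| + |b i|)

theorem abs_affine_le_gateBound {n m p : ℕ} (W : Matrix (Fin n) (Fin m) ℝ)
    (U : Matrix (Fin n) (Fin p) ℝ) (b : Fin n → ℝ) {u : Fin m → ℝ} {x : Fin p → ℝ} {c : ℝ}
    (hu : normInf u ≤ 1) (hx : normInf x ≤ c) (i : Fin n) :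
    |(W *ᵥ u + U *ᵥ x + b) i| ≤ gateBound W U b c := by
  have hW := (abs_mulVec_le W u i).trans
    (mul_le_of_le_one_right (Finset.sum_nonneg fun j _ => abs_nonneg (W i j)) hu)
  have hU := (abs_mulVec_le U x i).trans
    (mul_le_mul_of_nonneg_left hx (Finset.sum_nonneg fun j _ => abs_nonneg (U i j)))
  refine ((abs_add_three _ _ _).trans ?_).trans
    (le_ciSup (f := fun i => ∑ j, |W i j| + c * ∑ j, |U i j| + |b i|)
      (Set.finite_range _).bddAbove i)
  linarith

namespace GRU

variable {nx nu : ℕ}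

section Definitions

variable (Wr : Matrix (Fin nx) (Fin nu) ℝ) (Ur : Matrix (Fin nx) (Fin nx) ℝ) (br : Fin nx → ℝ)
  (u : Fin nu → ℝ)

noncomputable def candidate (x af : Fin nx → ℝ) : Fin nx → ℝ :=
  fun j => Real.tanh ((Wr *ᵥ u + Ur *ᵥ (fun i => Real.sigmoid (af i) * x i) + br) j)

/-- `az` and `af` are the pre-activations of the gates `z` and `f`; the GRU and its observer
differ only in these. -/
noncomputable def update (x az af : Fin nx → ℝ) : Fin nx → ℝ :=
  fun j => Real.sigmoid (az j) * x j + (1 - Real.sigmoid (az j)) * candidate Wr Ur br u x af j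

end Definitions

variable {Wr : Matrix (Fin nx) (Fin nu) ℝ} {Ur : Matrix (Fin nx) (Fin nx) ℝ} {br : Fin nx → ℝ}
  {u : Fin nu → ℝ}

theorem normInf_update_le {x az af : Fin nx → ℝ} {c : ℝ} (hc : 1 ≤ c) (hx : normInf x ≤ c) :
    normInf (update Wr Ur br u x az af) ≤ c := by
  refine normInf_le (zero_le_one.trans hc) fun j => ?_
  have hz₀ := Real.sigmoid_nonneg (az j)
  have hz₁ := Real.sigmoid_le_one (az j)
  calc |update Wr Ur br u x az af j|
      ≤ Real.sigmoid (az j) * |x j| + (1 - Real.sigmoid (az j)) * |candidate Wr Ur br u x af j| := by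
        refine (abs_add_le _ _).trans_eq ?_
        rw [abs_mul, abs_mul, abs_of_nonneg hz₀, abs_of_nonneg (sub_nonneg.2 hz₁)]
    _ ≤ Real.sigmoid (az j) * c + (1 - Real.sigmoid (az j)) * c := by
        gcongr
        · exact (abs_le_normInf x j).trans hx
        · exact (Real.abs_tanh_lt_one _).le.trans hc
    _ = c := by ring

theorem normInf_le_of_update {x : ℕ → Fin nx → ℝ} {u : ℕ → Fin nu → ℝ} {az af : ℕ → Fin nx → ℝ}
    {c : ℝ} (hc : 1 ≤ c) (h₀ : normInf (x 0) ≤ c)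
    (hx : ∀ k, x (k + 1) = update Wr Ur br (u k) (x k) (az k) (af k)) (k : ℕ) :
    normInf (x k) ≤ c := by
  induction k with
  | zero => exact h₀
  | succ k ih => rw [hx k]; exact normInf_update_le hc ih

theorem normInf_sigmoid_mul_le (x af : Fin nx → ℝ) :
    normInf (fun i => Real.sigmoid (af i) * x i) ≤ normInf x :=
  normInf_le (normInf_nonneg x) fun i => by
    rw [abs_mul, abs_of_pos (Real.sigmoid_pos _)]
    exact mul_le_of_le_one_left (abs_nonneg _) (Real.sigmoid_le_one _) |>.trans (abs_le_normInf x i)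

theorem abs_candidate_le {x af : Fin nx → ℝ} {c : ℝ} (hu : normInf u ≤ 1) (hx : normInf x ≤ c)
    (j : Fin nx) : |candidate Wr Ur br u x af j| ≤ Real.tanh (gateBound Wr Ur br c) :=
  Real.abs_tanh_le_tanh (abs_affine_le_gateBound Wr Ur br hu ((normInf_sigmoid_mul_le x af).trans hx) j)

theorem abs_candidate_sub_le {x xh af afh : Fin nx → ℝ} {c sf Mf : ℝ} (hxh : normInf xh ≤ c)
    (hf : ∀ i, Real.sigmoid (af i) ≤ sf) (hdf : ∀ i, |afh i - af i| ≤ Mf * normInf (xh - x))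
    (j : Fin nx) :
    |candidate Wr Ur br u xh afh j - candidate Wr Ur br u x af j| ≤
      matNormInf Ur * ((sf + 4⁻¹ * c * Mf) * normInf (xh - x)) := by
  set N := normInf (xh - x)
  set g : Fin nx → ℝ := fun i => Real.sigmoid (af i) * x i
  set gh : Fin nx → ℝ := fun i => Real.sigmoid (afh i) * xh i
  have hg : ∀ i, |(gh - g) i| ≤ (sf + 4⁻¹ * c * Mf) * N := fun i => by
    have hσ : |Real.sigmoid (afh i) - Real.sigmoid (af i)| ≤ 4⁻¹ * (Mf * N) :=
      (Real.abs_sigmoid_sub_le _ _).trans (by linarith [hdf i])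
    have hsplit : (gh - g) i = Real.sigmoid (af i) * (xh i - x i) +
        (Real.sigmoid (afh i) - Real.sigmoid (af i)) * xh i := by
      simp only [g, gh, Pi.sub_apply]; ring
    calc |(gh - g) i|
        ≤ Real.sigmoid (af i) * |xh i - x i| +
            |Real.sigmoid (afh i) - Real.sigmoid (af i)| * |xh i| := by
          rw [hsplit]
          refine (abs_add_le _ _).trans_eq ?_
          rw [abs_mul, abs_mul, abs_of_pos (Real.sigmoid_pos _)]
      _ ≤ sf * N + 4⁻¹ * (Mf * N) * c :=
          add_le_add (mul_le_mul (hf i) (abs_le_normInf (xh - x) i) (abs_nonneg _)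
              ((Real.sigmoid_pos _).le.trans (hf i)))
            (mul_le_mul hσ ((abs_le_normInf xh i).trans hxh) (abs_nonneg _)
              ((abs_nonneg _).trans hσ))
      _ = (sf + 4⁻¹ * c * Mf) * N := by ring
  calc |candidate Wr Ur br u xh afh j - candidate Wr Ur br u x af j|
      ≤ |(Wr *ᵥ u + Ur *ᵥ gh + br) j - (Wr *ᵥ u + Ur *ᵥ g + br) j| := Real.abs_tanh_sub_le _ _
    _ = |(Ur *ᵥ (gh - g)) j| := by simp only [mulVec_sub, Pi.add_apply, Pi.sub_apply]; ring_nf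
    _ ≤ matNormInf Ur * normInf (gh - g) := abs_mulVec_le_matNormInf Ur _ j
    _ ≤ matNormInf Ur * ((sf + 4⁻¹ * c * Mf) * N) :=
        mul_le_mul_of_nonneg_left (normInf_le ((abs_nonneg _).trans (hg j)) hg)
          (matNormInf_nonneg Ur)

theorem normInf_update_sub_le {x xh az azh af afh : Fin nx → ℝ} {c sf φ Mz Mf lam : ℝ}
    (hlam : 0 ≤ lam) (hxh : normInf xh ≤ c) (hφ : ∀ j, |candidate Wr Ur br u xh afh j| ≤ φ)
    (hf : ∀ i, Real.sigmoid (af i) ≤ sf)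
    (hdz : ∀ j, |azh j - az j| ≤ Mz * normInf (xh - x))
    (hdf : ∀ i, |afh i - af i| ≤ Mf * normInf (xh - x))
    (hκ : ∀ j, Real.sigmoid (az j) +
      (1 - Real.sigmoid (az j)) * ((1 / 4) * c * Mf + sf) * matNormInf Ur +
        (1 / 4) * (φ + c) * Mz ≤ lam) :
    normInf (update Wr Ur br u xh azh afh - update Wr Ur br u x az af) ≤
      lam * normInf (xh - x) := by
  refine normInf_le (mul_nonneg hlam (normInf_nonneg _)) fun j => ?_
  set N := normInf (xh - x)
  set z := Real.sigmoid (az j)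
  have hz₀ : 0 ≤ z := Real.sigmoid_nonneg _
  have hz₁ : z ≤ 1 := Real.sigmoid_le_one _
  have hx : |xh j - x j| ≤ N := abs_le_normInf (xh - x) j
  have hσ : |Real.sigmoid (azh j) - z| ≤ 4⁻¹ * (Mz * N) :=
    (Real.abs_sigmoid_sub_le _ _).trans (by linarith [hdz j])
  have hr : |xh j - candidate Wr Ur br u xh afh j| ≤ c + φ :=
    (abs_sub _ _).trans (add_le_add ((abs_le_normInf xh j).trans hxh) (hφ j))
  calc |(update Wr Ur br u xh azh afh - update Wr Ur br u x az af) j|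
      ≤ z * |xh j - x j| + |Real.sigmoid (azh j) - z| * |xh j - candidate Wr Ur br u xh afh j| +
          (1 - z) * |candidate Wr Ur br u xh afh j - candidate Wr Ur br u x af j| :=
        abs_gated_sub_gated_le hz₀ hz₁
    _ ≤ z * N + 4⁻¹ * (Mz * N) * (c + φ) +
          (1 - z) * (matNormInf Ur * ((sf + 4⁻¹ * c * Mf) * N)) :=
        add_le_add (add_le_add (mul_le_mul_of_nonneg_left hx hz₀)
            (mul_le_mul hσ hr (abs_nonneg _) ((abs_nonneg _).trans hσ)))
          (mul_le_mul_of_nonneg_left (abs_candidate_sub_le hxh hf hdf j) (sub_nonneg.2 hz₁))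
    _ = (z + (1 - z) * ((1 / 4) * c * Mf + sf) * matNormInf Ur + (1 / 4) * (φ + c) * Mz) * N := by
        ring
    _ ≤ lam * N := mul_le_mul_of_nonneg_right (hκ j) (normInf_nonneg _)

end GRU

theorem observer_preact_sub {n m p : ℕ} (W : Matrix (Fin n) (Fin m) ℝ)
    (U : Matrix (Fin n) (Fin n) ℝ) (b : Fin n → ℝ) (L : Matrix (Fin n) (Fin p) ℝ) (Uo : Matrix (Fin p) (Fin n) ℝ)
    (bo : Fin p → ℝ) (u : Fin m → ℝ) (x xh : Fin n → ℝ) :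
    W *ᵥ u + U *ᵥ xh + b + L *ᵥ ((Uo *ᵥ x + bo) - (Uo *ᵥ xh + bo)) - (W *ᵥ u + U *ᵥ x + b) =
      (U - L * Uo) *ᵥ (xh - x) := by
  simp only [sub_mulVec, mulVec_sub, ← mulVec_mulVec, add_sub_add_right_eq_sub]
  abel

theorem abs_observer_preact_sub_le {n m p : ℕ} (W : Matrix (Fin n) (Fin m) ℝ)
    (U : Matrix (Fin n) (Fin n) ℝ) (b : Fin n → ℝ) (L : Matrix (Fin n) (Fin p) ℝ)
    (Uo : Matrix (Fin p) (Fin n) ℝ) (bo : Fin p → ℝ) (u : Fin m → ℝ) (x xh : Fin n → ℝ)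
    (j : Fin n) :
    |(W *ᵥ u + U *ᵥ xh + b + L *ᵥ ((Uo *ᵥ x + bo) - (Uo *ᵥ xh + bo))) j -
        (W *ᵥ u + U *ᵥ x + b) j| ≤
      matNormInf (U - L * Uo) * normInf (xh - x) := by
  rw [← Pi.sub_apply, observer_preact_sub]
  exact abs_mulVec_le_matNormInf _ _ j

theorem normInf_observer_step_sub_le {nx nu ny : ℕ} (Wz Wf Wr : Matrix (Fin nx) (Fin nu) ℝ)
    (Uz Uf Ur : Matrix (Fin nx) (Fin nx) ℝ) (Uo : Matrix (Fin ny) (Fin nx) ℝ)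
    (bz bf br : Fin nx → ℝ) (bo : Fin ny → ℝ) (Lz Lf : Matrix (Fin nx) (Fin ny) ℝ)
    {u : Fin nu → ℝ} {x xh : Fin nx → ℝ} {c lam : ℝ}
    (hlam : 0 ≤ lam) (hu : normInf u ≤ 1) (hx : normInf x ≤ c) (hxh : normInf xh ≤ c)
    (hκ : ∀ z ∈ Set.Icc (1 - Real.sigmoid (gateBound Wz Uz bz c))
        (Real.sigmoid (gateBound Wz Uz bz c)),
      z + (1 - z) * ((1 / 4) * c * matNormInf (Uf - Lf * Uo) +
        Real.sigmoid (gateBound Wf Uf bf c)) * matNormInf Ur +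
          (1 / 4) * (Real.tanh (gateBound Wr Ur br c) + c) * matNormInf (Uz - Lz * Uo) ≤ lam) :
    normInf (GRU.update Wr Ur br u xh
        (Wz *ᵥ u + Uz *ᵥ xh + bz + Lz *ᵥ ((Uo *ᵥ x + bo) - (Uo *ᵥ xh + bo)))
        (Wf *ᵥ u + Uf *ᵥ xh + bf + Lf *ᵥ ((Uo *ᵥ x + bo) - (Uo *ᵥ xh + bo))) -
      GRU.update Wr Ur br u x (Wz *ᵥ u + Uz *ᵥ x + bz) (Wf *ᵥ u + Uf *ᵥ x + bf)) ≤
      lam * normInf (xh - x) :=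
  GRU.normInf_update_sub_le hlam hxh (GRU.abs_candidate_le hu hxh)
    (fun i => Real.sigmoid_monotone
      ((le_abs_self _).trans (abs_affine_le_gateBound Wf Uf bf hu hx i)))
    (abs_observer_preact_sub_le Wz Uz bz Lz Uo bo u x xh)
    (abs_observer_preact_sub_le Wf Uf bf Lf Uo bo u x xh)
    (fun j => hκ _ (Real.sigmoid_mem_Icc_of_abs_le (abs_affine_le_gateBound Wz Uz bz hu hx j)))

theorem stmt_13_general {nx nu ny : ℕ}
    (Wz Wf Wr : Matrix (Fin nx) (Fin nu) ℝ)
    (Uz Uf Ur : Matrix (Fin nx) (Fin nx) ℝ)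
    (Uo : Matrix (Fin ny) (Fin nx) ℝ)
    (bz bf br : Fin nx → ℝ) (bo : Fin ny → ℝ)
    (Lz Lf : Matrix (Fin nx) (Fin ny) ℝ)
    (xcheck : ℝ) (hxc : 1 ≤ xcheck)
    (u : ℕ → Fin nu → ℝ) (hu : ∀ k, normInf (u k) ≤ 1)
    (x xhat : ℕ → Fin nx → ℝ)
    (hx0 : normInf (x 0) ≤ xcheck) (hxhat0 : normInf (xhat 0) ≤ xcheck)
    -- system dynamics
    (hxdyn : ∀ k : ℕ,
      x (k + 1) = fun j =>
        (sigmoid ((Wz.mulVec (u k) + Uz.mulVec (x k) + bz) j)) * x k j +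
        (1 - sigmoid ((Wz.mulVec (u k) + Uz.mulVec (x k) + bz) j)) *
          Real.tanh ((Wr.mulVec (u k) +
            Ur.mulVec (fun i => sigmoid ((Wf.mulVec (u k) + Uf.mulVec (x k) + bf) i) * x k i) +
            br) j))
    -- observer dynamics, driven by the innovation `y_k - ŷ_k = U_o x_k - U_o x̂_k`
    (hxhatdyn : ∀ k : ℕ,
      xhat (k + 1) = fun j =>
        (sigmoid ((Wz.mulVec (u k) + Uz.mulVec (xhat k) + bz +
            Lz.mulVec ((Uo.mulVec (x k) + bo) - (Uo.mulVec (xhat k) + bo))) j)) * xhat k j +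
        (1 - sigmoid ((Wz.mulVec (u k) + Uz.mulVec (xhat k) + bz +
            Lz.mulVec ((Uo.mulVec (x k) + bo) - (Uo.mulVec (xhat k) + bo))) j)) *
          Real.tanh ((Wr.mulVec (u k) +
            Ur.mulVec (fun i =>
              sigmoid ((Wf.mulVec (u k) + Uf.mulVec (xhat k) + bf +
                Lf.mulVec ((Uo.mulVec (x k) + bo) - (Uo.mulVec (xhat k) + bo))) i) * xhat k i) +
            br) j))
    (sigz : ℝ) (hsigz : sigz = sigmoid (⨆ i, (∑ j, |Wz i j| + xcheck * ∑ j, |Uz i j| + |bz i|)))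
    (sigf : ℝ) (hsigf : sigf = sigmoid (⨆ i, (∑ j, |Wf i j| + xcheck * ∑ j, |Uf i j| + |bf i|)))
    (phir : ℝ) (hphir : phir = Real.tanh (⨆ i, (∑ j, |Wr i j| + xcheck * ∑ j, |Ur i j| + |br i|)))
    (kappao : ℝ → ℝ)
    (hkappao : ∀ z : ℝ, kappao z =
      z + (1 - z) * ((1 / 4) * xcheck * matNormInf (Uf - Lf * Uo) + sigf) * matNormInf Ur +
        (1 / 4) * (phir + xcheck) * matNormInf (Uz - Lz * Uo))
    (lamo : ℝ) (hlamo0 : 0 < lamo)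
    (hcond1 : kappao sigz < lamo) (hcond2 : kappao (1 - sigz) < lamo) :
    ∀ k : ℕ, norm2 (xhat k - x k) ≤ Real.sqrt nx * lamo ^ k * norm2 (xhat 0 - x 0) := by
  subst hsigz hsigf hphir
  simp only [sigmoid_eq_real_sigmoid] at hxdyn hxhatdyn hkappao hcond1 hcond2
  have hx := GRU.normInf_le_of_update hxc hx0 hxdyn
  have hxh := GRU.normInf_le_of_update hxc hxhat0 hxhatdyn
  have hconv : ConvexOn ℝ Set.univ kappao := by
    refine ⟨convex_univ, fun z₁ _ z₂ _ s t _ _ hst => le_of_eq ?_⟩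
    obtain rfl : t = 1 - s := by linarith
    simp only [hkappao, smul_eq_mul]
    ring
  have hκ : ∀ z ∈ Set.Icc (1 - Real.sigmoid (gateBound Wz Uz bz xcheck))
      (Real.sigmoid (gateBound Wz Uz bz xcheck)), kappao z ≤ lamo := fun z hz =>
    (hconv.le_max_of_mem_Icc trivial trivial hz).trans (max_le hcond2.le hcond1.le)
  have hcontr : ∀ k, normInf (xhat (k + 1) - x (k + 1)) ≤ lamo * normInf (xhat k - x k) :=
    fun k => by
      rw [hxdyn k, hxhatdyn k]
      exact normInf_observer_step_sub_le Wz Wf Wr Uz Uf Ur Uo bz bf br bo Lz Lf hlamo0.le (hu k)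
        (hx k) (hxh k) fun z hz => (hkappao z).symm.trans_le (hκ z hz)
  intro k
  calc norm2 (xhat k - x k) ≤ √nx * normInf (xhat k - x k) := norm2_le_sqrt_mul_normInf _
    _ ≤ √nx * (lamo ^ k * normInf (xhat 0 - x 0)) := by
        gcongr
        exact le_geom (u := fun k => normInf (xhat k - x k)) hlamo0.le k fun i _ => hcontr i
    _ ≤ √nx * (lamo ^ k * norm2 (xhat 0 - x 0)) := by
        gcongr
        exact normInf_le_norm2 _
    _ = √nx * lamo ^ k * norm2 (xhat 0 - x 0) := by ring

/-- the Luenberger-like GRU observer is a weak exponential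
observer with overshoot `√n_x` and rate `λ_o` (Theorem 2). -/
theorem stmt_13 {nx nu ny : ℕ}
    (Wz Wf Wr : Matrix (Fin nx) (Fin nu) ℝ)
    (Uz Uf Ur : Matrix (Fin nx) (Fin nx) ℝ)
    (Uo : Matrix (Fin ny) (Fin nx) ℝ)
    (bz bf br : Fin nx → ℝ) (bo : Fin ny → ℝ)
    (Lz Lf : Matrix (Fin nx) (Fin ny) ℝ)
    (xcheck : ℝ) (hxc : 1 ≤ xcheck)
    (u : ℕ → Fin nu → ℝ) (hu : ∀ k, normInf (u k) ≤ 1)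
    (x xhat : ℕ → Fin nx → ℝ)
    (hx0 : normInf (x 0) ≤ xcheck) (hxhat0 : normInf (xhat 0) ≤ xcheck)
    -- system dynamics
    (hxdyn : ∀ k : ℕ,
      x (k + 1) = fun j =>
        (sigmoid ((Wz.mulVec (u k) + Uz.mulVec (x k) + bz) j)) * x k j +
        (1 - sigmoid ((Wz.mulVec (u k) + Uz.mulVec (x k) + bz) j)) *
          Real.tanh ((Wr.mulVec (u k) +
            Ur.mulVec (fun i => sigmoid ((Wf.mulVec (u k) + Uf.mulVec (x k) + bf) i) * x k i) +
            br) j))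
    -- observer dynamics, driven by the innovation `y_k - ŷ_k = U_o x_k - U_o x̂_k`
    (hxhatdyn : ∀ k : ℕ,
      xhat (k + 1) = fun j =>
        (sigmoid ((Wz.mulVec (u k) + Uz.mulVec (xhat k) + bz +
            Lz.mulVec ((Uo.mulVec (x k) + bo) - (Uo.mulVec (xhat k) + bo))) j)) * xhat k j +
        (1 - sigmoid ((Wz.mulVec (u k) + Uz.mulVec (xhat k) + bz +
            Lz.mulVec ((Uo.mulVec (x k) + bo) - (Uo.mulVec (xhat k) + bo))) j)) *
          Real.tanh ((Wr.mulVec (u k) +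
            Ur.mulVec (fun i =>
              sigmoid ((Wf.mulVec (u k) + Uf.mulVec (xhat k) + bf +
                Lf.mulVec ((Uo.mulVec (x k) + bo) - (Uo.mulVec (xhat k) + bo))) i) * xhat k i) +
            br) j))
    (sigz : ℝ) (hsigz : sigz = sigmoid (⨆ i, (∑ j, |Wz i j| + xcheck * ∑ j, |Uz i j| + |bz i|)))
    (sigf : ℝ) (hsigf : sigf = sigmoid (⨆ i, (∑ j, |Wf i j| + xcheck * ∑ j, |Uf i j| + |bf i|)))
    (phir : ℝ) (hphir : phir = Real.tanh (⨆ i, (∑ j, |Wr i j| + xcheck * ∑ j, |Ur i j| + |br i|)))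
    (kappao : ℝ → ℝ)
    (hkappao : ∀ z : ℝ, kappao z =
      z + (1 - z) * ((1 / 4) * xcheck * matNormInf (Uf - Lf * Uo) + sigf) * matNormInf Ur +
        (1 / 4) * (phir + xcheck) * matNormInf (Uz - Lz * Uo))
    (lamo : ℝ) (hlamo0 : 0 < lamo) (hlamo1 : lamo < 1)
    (hcond1 : kappao sigz < lamo) (hcond2 : kappao (1 - sigz) < lamo) :
    ∀ k : ℕ, norm2 (xhat k - x k) ≤ Real.sqrt nx * lamo ^ k * norm2 (xhat 0 - x 0) :=
  stmt_13_general Wz Wf Wr Uz Uf Ur Uo bz bf br bo Lz Lf xcheck hxc u hu x xhat hx0 hxhat0 hxdyn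
    hxhatdyn sigz hsigz sigf hsigf phir hphir kappao hkappao lamo hlamo0 hcond1 hcond2
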